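/- arXiv:math/0208190 — 11 statements merged into one kernel-verified Lean document; each statement's English description precedes it below -/
import Mathlib

section
/- Let γ : ℝ → ℤ → ℂ² be a flow on discrete curves with coefficients α, β, i.e. ∂_t γ_k = α_k γ_k + (β_k/u_k)(γ_{k+1} − γ_{k−1}) with u_k(t) ≠ 0 for all t,k. Then for all t and k the determinants g_k(t) = det(γ_k(t),γ_{k+1}(t)) satisfy ∂_t g_k = g_k(α_{k+1} + α_k) + β_{k+1} − β_k. -/
noncomputable section

/-- The determinant of two vectors in `ℂ²`. -/
def det2 (a b : ℂ × ℂ) : ℂ := a.1 * b.2 - a.2 * b.1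

/-- `g_k(t) = det(γ_k(t), γ_{k+1}(t))` for a time-dependent discrete curve. -/
def gD (γ : ℝ → ℤ → ℂ × ℂ) (t : ℝ) (k : ℤ) : ℂ := det2 (γ t k) (γ t (k + 1))

/-- `u_k(t) = det(γ_{k-1}(t), γ_{k+1}(t))` for a time-dependent discrete curve. -/
def uD (γ : ℝ → ℤ → ℂ × ℂ) (t : ℝ) (k : ℤ) : ℂ := det2 (γ t (k - 1)) (γ t (k + 1))

lemma hasDerivAt_fst {f : ℝ → ℂ × ℂ} {f' : ℂ × ℂ} {t : ℝ} (h : HasDerivAt f f' t) :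
    HasDerivAt (fun s => (f s).1) f'.1 t := by
  have := h.hasFDerivAt.fst
  have h2 := this.hasDerivAt
  simpa using h2

lemma hasDerivAt_snd {f : ℝ → ℂ × ℂ} {f' : ℂ × ℂ} {t : ℝ} (h : HasDerivAt f f' t) :
    HasDerivAt (fun s => (f s).2) f'.2 t := by
  have := h.hasFDerivAt.snd
  have h2 := this.hasDerivAt
  simpa using h2

/-- For a flow `∂_t γ_k = α_k γ_k + (β_k/u_k)(γ_{k+1} - γ_{k-1})` on discrete curves in `ℂ²`
with `u_k ≠ 0`, the determinants `g_k = det(γ_k, γ_{k+1})` satisfy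
`∂_t g_k = g_k (α_{k+1} + α_k) + β_{k+1} - β_k`. -/
theorem stmt1 (γ : ℝ → ℤ → ℂ × ℂ) (α β : ℝ → ℤ → ℂ)
    (hu : ∀ (t : ℝ) (k : ℤ), uD γ t k ≠ 0)
    (hflow : ∀ (t : ℝ) (k : ℤ), HasDerivAt (fun s => γ s k)
      (α t k • γ t k + (β t k / uD γ t k) • (γ t (k + 1) - γ t (k - 1))) t) :
    ∀ (t : ℝ) (k : ℤ), HasDerivAt (fun s => gD γ s k)
      (gD γ t k * (α t (k + 1) + α t k) + β t (k + 1) - β t k) t := by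
  intro t k
  have h0 := hflow t k
  have h1 := hflow t (k + 1)
  set v0 := α t k • γ t k + (β t k / uD γ t k) • (γ t (k + 1) - γ t (k - 1)) with hv0
  set v1 := α t (k + 1) • γ t (k + 1) +
      (β t (k + 1) / uD γ t (k + 1)) • (γ t (k + 1 + 1) - γ t (k + 1 - 1)) with hv1
  have d : HasDerivAt (fun s => gD γ s k)
      (v0.1 * (γ t (k + 1)).2 + (γ t k).1 * v1.2
        - (v0.2 * (γ t (k + 1)).1 + (γ t k).2 * v1.1)) t := by
    have := (((hasDerivAt_fst h0).mul (hasDerivAt_snd h1)).sub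
      ((hasDerivAt_snd h0).mul (hasDerivAt_fst h1)))
    exact this
  convert d using 1
  have hk : k + 1 - 1 = k := by ring
  have hu0 := hu t k
  have hu1 := hu t (k + 1)
  simp only [hv0, hv1, hk, gD, uD, det2, Prod.smul_fst, Prod.smul_snd, Prod.fst_add,
    Prod.snd_add, Prod.fst_sub, Prod.snd_sub, smul_eq_mul] at *
  have hu0' : (γ t (k + 1)).2 * (γ t (k - 1)).1 - (γ t (k + 1)).1 * (γ t (k - 1)).2 ≠ 0 := by
    intro h; apply hu0; linear_combination h
  field_simp
  ring
end
end

section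
/- Let γ : ℝ → ℤ → ℂ² be a flow on discrete curves with coefficients α, β, and assume g_k(t) ≠ 0 and u_k(t) ≠ 0 for all t,k. Then the cross-ratios Q_k = g_{k−1}g_{k+1}/(u_k u_{k+1}) satisfy, for all t and k: (∂_t Q_k)/Q_k = (Q_k − 1)·(β_{k+1}(1/g_{k+1} + 1/g_k) − β_k(1/g_k + 1/g_{k−1})) + Q_{k+1}·β_{k+2}·(1/g_{k+2} + 1/g_{k+1}) − Q_{k−1}·β_{k−1}·(1/g_{k−1} + 1/g_{k−2}). -/
noncomputable section

/-- The cross-ratio `Q_k = cr(γ_{k-1}, γ_k, γ_{k+2}, γ_{k+1}) = g_{k-1} g_{k+1}/(u_k u_{k+1})`. -/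
def QD (γ : ℝ → ℤ → ℂ × ℂ) (t : ℝ) (k : ℤ) : ℂ :=
  gD γ t (k - 1) * gD γ t (k + 1) / (uD γ t k * uD γ t (k + 1))

/-- Velocity vector of the flow. -/
def Dv (γ : ℝ → ℤ → ℂ × ℂ) (α β : ℝ → ℤ → ℂ) (t : ℝ) (k : ℤ) : ℂ × ℂ :=
  α t k • γ t k + (β t k / uD γ t k) • (γ t (k + 1) - γ t (k - 1))

lemma det2_hasDerivAt (γ : ℝ → ℤ → ℂ × ℂ) (α β : ℝ → ℤ → ℂ)
    (hflow : ∀ (t : ℝ) (k : ℤ), HasDerivAt (fun s => γ s k) (Dv γ α β t k) t)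
    (t : ℝ) (m n : ℤ) :
    HasDerivAt (fun s => det2 (γ s m) (γ s n))
      (det2 (Dv γ α β t m) (γ t n) + det2 (γ t m) (Dv γ α β t n)) t := by
  have hm := hflow t m
  have hn := hflow t n
  have hm1 : HasDerivAt (fun s => (γ s m).1) (Dv γ α β t m).1 t := hm.fst
  have hm2 : HasDerivAt (fun s => (γ s m).2) (Dv γ α β t m).2 t := hm.snd
  have hn1 : HasDerivAt (fun s => (γ s n).1) (Dv γ α β t n).1 t := hn.fst
  have hn2 : HasDerivAt (fun s => (γ s n).2) (Dv γ α β t n).2 t := hn.snd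
  have h : HasDerivAt (fun s => (γ s m).1 * (γ s n).2 - (γ s m).2 * (γ s n).1) _ t :=
    (hm1.mul hn2).sub (hm2.mul hn1)
  simp only [det2]
  convert h using 1
  ring

lemma gD_hasDerivAt (γ : ℝ → ℤ → ℂ × ℂ) (α β : ℝ → ℤ → ℂ)
    (hu : ∀ (t : ℝ) (k : ℤ), uD γ t k ≠ 0)
    (hflow : ∀ (t : ℝ) (k : ℤ), HasDerivAt (fun s => γ s k) (Dv γ α β t k) t)
    (t : ℝ) (k : ℤ) :
    HasDerivAt (fun s => gD γ s k)
      ((α t k + α t (k + 1)) * gD γ t k + (β t (k + 1) - β t k)) t := by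
  have h := det2_hasDerivAt γ α β hflow t k (k + 1)
  simp only [gD]
  convert h using 1
  have huk := hu t k
  have huk1 := hu t (k + 1)
  simp only [uD, det2] at huk huk1
  simp only [Dv, det2, uD, gD, Prod.fst_add, Prod.snd_add, Prod.smul_fst, Prod.smul_snd,
    Prod.fst_sub, Prod.snd_sub, smul_eq_mul,
    show k + 1 - 1 = k from by ring, show k + 1 + 1 = k + 2 from by ring] at *
  have huk' : (γ t (k + 1)).2 * (γ t (k - 1)).1 - (γ t (k + 1)).1 * (γ t (k - 1)).2 ≠ 0 := by
    contrapose! huk; linear_combination huk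
  field_simp
  ring

set_option maxHeartbeats 1600000 in
lemma uD_hasDerivAt (γ : ℝ → ℤ → ℂ × ℂ) (α β : ℝ → ℤ → ℂ)
    (hg : ∀ (t : ℝ) (k : ℤ), gD γ t k ≠ 0)
    (hu : ∀ (t : ℝ) (k : ℤ), uD γ t k ≠ 0)
    (hflow : ∀ (t : ℝ) (k : ℤ), HasDerivAt (fun s => γ s k) (Dv γ α β t k) t)
    (t : ℝ) (k : ℤ) :
    HasDerivAt (fun s => uD γ s k)
      ((α t (k - 1) + α t (k + 1)) * uD γ t k
        + β t (k - 1) / uD γ t (k - 1) *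
            (gD γ t k - (uD γ t (k - 1) * uD γ t k - gD γ t (k - 2) * gD γ t k) / gD γ t (k - 1))
        + β t (k + 1) / uD γ t (k + 1) *
            ((uD γ t k * uD γ t (k + 1) - gD γ t (k - 1) * gD γ t (k + 1)) / gD γ t k
              - gD γ t (k - 1))) t := by
  have h := det2_hasDerivAt γ α β hflow t (k - 1) (k + 1)
  simp only [uD]
  convert h using 1
  have hu1 := hu t (k - 1)
  have hu2 := hu t (k + 1)
  have hg1 := hg t (k - 1)
  have hg2 := hg t k
  simp only [uD, det2, gD,
    show k - 1 + 1 = k from by ring, show k - 1 - 1 = k - 2 from by ring,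
    show k + 1 + 1 = k + 2 from by ring, show k + 1 - 1 = k from by ring,
    show k - 2 + 1 = k - 1 from by ring, show k + 2 - 1 = k + 1 from by ring,
    id] at hu1 hu2 hg1 hg2
  simp only [Dv, det2, uD, gD, Prod.fst_add, Prod.snd_add, Prod.smul_fst, Prod.smul_snd,
    Prod.fst_sub, Prod.snd_sub, smul_eq_mul,
    show k - 1 + 1 = k from by ring, show k - 1 - 1 = k - 2 from by ring,
    show k + 1 + 1 = k + 2 from by ring, show k + 1 - 1 = k from by ring,
    show k - 2 + 1 = k - 1 from by ring, show k + 2 - 1 = k + 1 from by ring,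
    id]
  clear h hflow hu hg
  revert hu1 hu2 hg1 hg2
  generalize (γ t (k - 2)).1 = a1
  generalize (γ t (k - 2)).2 = a2
  generalize (γ t (k - 1)).1 = b1
  generalize (γ t (k - 1)).2 = b2
  generalize (γ t k).1 = c1
  generalize (γ t k).2 = c2
  generalize (γ t (k + 1)).1 = d1
  generalize (γ t (k + 1)).2 = d2
  generalize (γ t (k + 2)).1 = e1
  generalize (γ t (k + 2)).2 = e2
  intro hu1 hu2 hg1 hg2
  have hu1' : d2 * c1 - d1 * c2 ≠ 0 := by contrapose! hu1; linear_combination hu1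
  field_simp
  ring

set_option maxHeartbeats 1600000 in
/-- For a flow `∂_t γ_k = α_k γ_k + (β_k/u_k)(γ_{k+1} - γ_{k-1})` on discrete curves in `ℂ²`
with `g_k ≠ 0` and `u_k ≠ 0`, the cross-ratios `Q_k = g_{k-1}g_{k+1}/(u_k u_{k+1})` satisfy
`(∂_t Q_k)/Q_k = (Q_k - 1)(β_{k+1}(1/g_{k+1} + 1/g_k) - β_k(1/g_k + 1/g_{k-1}))
  + Q_{k+1} β_{k+2} (1/g_{k+2} + 1/g_{k+1}) - Q_{k-1} β_{k-1} (1/g_{k-1} + 1/g_{k-2})`. -/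
theorem stmt3 (γ : ℝ → ℤ → ℂ × ℂ) (α β : ℝ → ℤ → ℂ)
    (hg : ∀ (t : ℝ) (k : ℤ), gD γ t k ≠ 0)
    (hu : ∀ (t : ℝ) (k : ℤ), uD γ t k ≠ 0)
    (hflow : ∀ (t : ℝ) (k : ℤ), HasDerivAt (fun s => γ s k)
      (α t k • γ t k + (β t k / uD γ t k) • (γ t (k + 1) - γ t (k - 1))) t) :
    ∀ (t : ℝ) (k : ℤ), HasDerivAt (fun s => QD γ s k)
      (QD γ t k *
        ((QD γ t k - 1) *
            (β t (k + 1) * ((gD γ t (k + 1))⁻¹ + (gD γ t k)⁻¹)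
              - β t k * ((gD γ t k)⁻¹ + (gD γ t (k - 1))⁻¹))
          + QD γ t (k + 1) * β t (k + 2) * ((gD γ t (k + 2))⁻¹ + (gD γ t (k + 1))⁻¹)
          - QD γ t (k - 1) * β t (k - 1) * ((gD γ t (k - 1))⁻¹ + (gD γ t (k - 2))⁻¹))) t := by
  intro t k
  have hflow' : ∀ (t : ℝ) (k : ℤ), HasDerivAt (fun s => γ s k) (Dv γ α β t k) t := hflow
  have h1 := gD_hasDerivAt γ α β hu hflow' t (k - 1)
  have h2 := gD_hasDerivAt γ α β hu hflow' t (k + 1)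
  have h3 := uD_hasDerivAt γ α β hg hu hflow' t k
  have h4 := uD_hasDerivAt γ α β hg hu hflow' t (k + 1)
  have hne : uD γ t k * uD γ t (k + 1) ≠ 0 := mul_ne_zero (hu t k) (hu t (k + 1))
  have h : HasDerivAt (fun s => gD γ s (k - 1) * gD γ s (k + 1) / (uD γ s k * uD γ s (k + 1))) _ t :=
    ((show HasDerivAt (fun s => gD γ s (k - 1) * gD γ s (k + 1)) _ t from h1.mul h2).div
      (show HasDerivAt (fun s => uD γ s k * uD γ s (k + 1)) _ t from h3.mul h4) hne)
  simp only [QD]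
  convert h using 1
  have e1 := hg t (k - 2); have e2 := hg t (k - 1); have e3 := hg t k
  have e4 := hg t (k + 1); have e5 := hg t (k + 2)
  have e6 := hu t (k - 1); have e7 := hu t k; have e8 := hu t (k + 1); have e9 := hu t (k + 2)
  simp only [QD,
    show k - 1 + 1 = k from by ring, show k - 1 - 1 = k - 2 from by ring,
    show k + 1 + 1 = k + 2 from by ring, show k + 1 - 1 = k from by ring,
    show k + 1 - 2 = k - 1 from by ring, show k + 2 + 1 = k + 3 from by ring,
    show k + 2 - 1 = k + 1 from by ring, id]
  clear h h1 h2 h3 h4 hne hflow hflow' hg hu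
  revert e1 e2 e3 e4 e5 e6 e7 e8 e9
  generalize gD γ t (k - 2) = G1
  generalize gD γ t (k - 1) = G2
  generalize gD γ t k = G3
  generalize gD γ t (k + 1) = G4
  generalize gD γ t (k + 2) = G5
  generalize uD γ t (k - 1) = U1
  generalize uD γ t k = U2
  generalize uD γ t (k + 1) = U3
  generalize uD γ t (k + 2) = U4
  intro e1 e2 e3 e4 e5 e6 e7 e8 e9
  have hh1 : G1 * G1⁻¹ = 1 := mul_inv_cancel₀ e1
  have hh2 : G2 * G2⁻¹ = 1 := mul_inv_cancel₀ e2
  have hh3 : G3 * G3⁻¹ = 1 := mul_inv_cancel₀ e3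
  have hh4 : G4 * G4⁻¹ = 1 := mul_inv_cancel₀ e4
  have hh5 : G5 * G5⁻¹ = 1 := mul_inv_cancel₀ e5
  have hh6 : U1 * U1⁻¹ = 1 := mul_inv_cancel₀ e6
  have hh7 : U2 * U2⁻¹ = 1 := mul_inv_cancel₀ e7
  have hh8 : U3 * U3⁻¹ = 1 := mul_inv_cancel₀ e8
  have hh9 : U4 * U4⁻¹ = 1 := mul_inv_cancel₀ e9
  linear_combination
    ((-1)*G2*G3*G4*U1⁻¹*U2⁻¹^2*U3⁻¹*(β t (k - 1))) * hh1 +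
    (G4*U2⁻¹*U3⁻¹*(β t k) + (-1)*G4*U1*U2*U3*U1⁻¹*U2⁻¹^2*U3⁻¹^2*(β t (k - 1)) + (-1)*G2*G4^2*U2⁻¹^2*U3⁻¹^2*(β t k) + (-1)*G1*G3*G4*U1⁻¹*U2⁻¹^2*U3⁻¹*(β t (k - 1)) + G1*G3*G4*U3*U1⁻¹*U2⁻¹^2*U3⁻¹^2*(β t (k - 1))) * hh2 +
    ((-1)*G2*U2⁻¹*U3⁻¹*(β t (k + 1)) + G2*U2*U3*U4*U2⁻¹^2*U3⁻¹^2*U4⁻¹*(β t (k + 2)) + G2*G3*G5*U2⁻¹*U3⁻¹^2*U4⁻¹*(β t (k + 2)) + (-1)*G2*G3*G5*U2*U2⁻¹^2*U3⁻¹^2*U4⁻¹*(β t (k + 2)) + G2^2*G4*U2⁻¹^2*U3⁻¹^2*(β t (k + 1))) * hh4 +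
    (G2*G3*G4*U2⁻¹*U3⁻¹^2*U4⁻¹*(β t (k + 2))) * hh5 +
    ((-1)*G4*U2*U3*U2⁻¹^2*U3⁻¹^2*(β t (k - 1))) * hh6 +
    ((-1)*G4*U3*U2⁻¹*U3⁻¹^2*(β t k) + (-1)*G2*U3*U2⁻¹*U3⁻¹^2*(β t (k + 2)) + G2*U3*U2⁻¹*U3⁻¹^2*(β t (k + 1)) + G2*U3*U4*U2⁻¹*U3⁻¹^2*U4⁻¹*(β t (k + 2)) + (-1)*G2*G4*U3*G3⁻¹*U2⁻¹*U3⁻¹^2*(β t k) + G2*G4*U3^2*G3⁻¹*U2⁻¹*U3⁻¹^3*(β t (k + 1)) + (-1)*G2*G4*U2*U3*G3⁻¹*U2⁻¹^2*U3⁻¹^2*(β t k) + G2*G4^2*U2⁻¹^2*U3⁻¹^2*(β t k) + (-1)*G2*G3*G5*U2⁻¹*U3⁻¹^2*U4⁻¹*(β t (k + 2)) + (-1)*G2*G3*G4*U2⁻¹*U3⁻¹^2*U4⁻¹*(β t (k + 2)) + G2^2*G4^2*G3⁻¹*U2⁻¹^2*U3⁻¹^2*(β t k)) * hh7 +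
    ((-1)*G4*U2⁻¹*U3⁻¹*(β t k) + (-1)*G2*U2⁻¹*U3⁻¹*(β t (k + 2)) + G2*U2⁻¹*U3⁻¹*(β t (k + 1)) + G2*U4*U2⁻¹*U3⁻¹*U4⁻¹*(β t (k + 2)) + G2*G4*G3⁻¹*U2⁻¹*U3⁻¹*(β t (k + 1)) + (-1)*G2*G4*G3⁻¹*U2⁻¹*U3⁻¹*(β t k) + G2*G4*U3*G3⁻¹*U2⁻¹*U3⁻¹^2*(β t (k + 1)) + G2*G3*G4*U1⁻¹*U2⁻¹^2*U3⁻¹*(β t (k - 1)) + (-1)*G2^2*G4*U2⁻¹^2*U3⁻¹^2*(β t (k + 1)) + (-1)*G2^2*G4^2*G3⁻¹*U2⁻¹^2*U3⁻¹^2*(β t (k + 1)) + G1*G3*G4*U1⁻¹*U2⁻¹^2*U3⁻¹*(β t (k - 1))) * hh8 +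
    (G2*U2⁻¹*U3⁻¹*(β t (k + 2))) * hh9
end
end

section
/- Let γ : ℝ → ℤ → ℂ², γ_k(t) = (x_k(t), y_k(t)), be a flow on discrete curves with coefficients α, β, and assume for all t,k that y_k(t) ≠ 0, g_k(t) ≠ 0 and u_k(t) ≠ 0. Let c_k(t) = x_k(t)/y_k(t). Then c_{k+1} ≠ c_{k−1} and for all t and k: ∂_t c_k = β_k·((g_k + g_{k−1})/(2 g_k g_{k−1}))·2·((c_{k+1} − c_k)(c_k − c_{k−1}))/(c_{k+1} − c_{k−1}). -/
noncomputable section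

/-- The projection `c_k = x_k / y_k` of a discrete curve in `ℂ²` to `ℂ ⊂ ℂP¹`. -/
def cD (γ : ℝ → ℤ → ℂ × ℂ) (t : ℝ) (k : ℤ) : ℂ := (γ t k).1 / (γ t k).2

private lemma aux1 (b g g' u y1 y2 y3 : ℂ) (hg : g ≠ 0) (hg' : g' ≠ 0) (hu : u ≠ 0)
    (hy1 : y1 ≠ 0) (hy2 : y2 ≠ 0) (hy3 : y3 ≠ 0) :
    b * ((g + g') / (2 * g * g')) * (2 * (-g / (y2 * y3) * (-g' / (y1 * y2))) / (-u / (y1 * y3)))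
      = -(b * (g + g')) / (u * y2 ^ 2) := by
  field_simp

private lemma aux2 (a b u x y p1 p2 : ℂ) (hu : u ≠ 0) (hy : y ≠ 0) :
    ((a * x + b / u * p1) * y - x * (a * y + b / u * p2)) / y ^ 2
      = b * (p1 * y - p2 * x) / (u * y ^ 2) := by
  field_simp
  ring

/-- For a flow `∂_t γ_k = α_k γ_k + (β_k/u_k)(γ_{k+1} - γ_{k-1})` on discrete curves in `ℂ²`
with nonvanishing second coordinates and `g_k ≠ 0`, `u_k ≠ 0`, the projected curve
`c_k = x_k/y_k` in `ℂ` satisfies `c_{k+1} ≠ c_{k-1}` and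
`∂_t c_k = β_k ((g_k + g_{k-1})/(2 g_k g_{k-1})) ⬝ 2 (c_{k+1} - c_k)(c_k - c_{k-1})/(c_{k+1} - c_{k-1})`. -/
theorem stmt4 (γ : ℝ → ℤ → ℂ × ℂ) (α β : ℝ → ℤ → ℂ)
    (hy : ∀ (t : ℝ) (k : ℤ), (γ t k).2 ≠ 0)
    (hg : ∀ (t : ℝ) (k : ℤ), gD γ t k ≠ 0)
    (hu : ∀ (t : ℝ) (k : ℤ), uD γ t k ≠ 0)
    (hflow : ∀ (t : ℝ) (k : ℤ), HasDerivAt (fun s => γ s k)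
      (α t k • γ t k + (β t k / uD γ t k) • (γ t (k + 1) - γ t (k - 1))) t) :
    ∀ (t : ℝ) (k : ℤ),
      cD γ t (k + 1) ≠ cD γ t (k - 1) ∧
      HasDerivAt (fun s => cD γ s k)
        (β t k * ((gD γ t k + gD γ t (k - 1)) / (2 * gD γ t k * gD γ t (k - 1))) *
          (2 * ((cD γ t (k + 1) - cD γ t k) * (cD γ t k - cD γ t (k - 1)))
            / (cD γ t (k + 1) - cD γ t (k - 1)))) t := by
  intro t k
  have hy1 := hy t (k - 1)
  have hy2 := hy t k
  have hy3 := hy t (k + 1)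
  have hgk := hg t k
  have hgk1 := hg t (k - 1)
  have huk := hu t k
  have hk1 : (k - 1) + 1 = k := by ring
  have e3 : cD γ t (k + 1) - cD γ t (k - 1)
      = -uD γ t k / ((γ t (k - 1)).2 * (γ t (k + 1)).2) := by
    simp only [cD, uD, det2]
    field_simp
    ring
  have e1 : cD γ t (k + 1) - cD γ t k
      = -gD γ t k / ((γ t k).2 * (γ t (k + 1)).2) := by
    simp only [cD, gD, det2]
    field_simp
    ring
  have e2 : cD γ t k - cD γ t (k - 1)
      = -gD γ t (k - 1) / ((γ t (k - 1)).2 * (γ t k).2) := by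
    simp only [cD, gD, det2, hk1]
    field_simp
    ring
  have hsub : cD γ t (k + 1) ≠ cD γ t (k - 1) := by
    rw [← sub_ne_zero, e3]
    exact div_ne_zero (neg_ne_zero.mpr huk) (mul_ne_zero hy1 hy3)
  refine ⟨hsub, ?_⟩
  have h := hflow t k
  have hx : HasDerivAt (fun s => (γ s k).1)
      (α t k • γ t k + (β t k / uD γ t k) • (γ t (k + 1) - γ t (k - 1))).1 t := h.fst
  have hyd : HasDerivAt (fun s => (γ s k).2)
      (α t k • γ t k + (β t k / uD γ t k) • (γ t (k + 1) - γ t (k - 1))).2 t := h.snd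
  have hdiv := hx.div hyd hy2
  have key : HasDerivAt (fun s => cD γ s k)
      (((α t k • γ t k + (β t k / uD γ t k) • (γ t (k + 1) - γ t (k - 1))).1 * (γ t k).2 -
        (γ t k).1 * (α t k • γ t k + (β t k / uD γ t k) • (γ t (k + 1) - γ t (k - 1))).2)
        / (γ t k).2 ^ 2) t := hdiv
  convert key using 1
  rw [e1, e2, e3]
  simp only [Prod.fst_add, Prod.snd_add, Prod.smul_fst, Prod.smul_snd, Prod.fst_sub,
    Prod.snd_sub, smul_eq_mul]
  rw [aux1 (β t k) (gD γ t k) (gD γ t (k - 1)) (uD γ t k) (γ t (k - 1)).2 (γ t k).2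
    (γ t (k + 1)).2 hgk hgk1 huk hy1 hy2 hy3,
    aux2 (α t k) (β t k) (uD γ t k) (γ t k).1 (γ t k).2
    ((γ t (k + 1)).1 - (γ t (k - 1)).1) ((γ t (k + 1)).2 - (γ t (k - 1)).2) huk hy2]
  have hgg : ((γ t (k + 1)).1 - (γ t (k - 1)).1) * (γ t k).2
        - ((γ t (k + 1)).2 - (γ t (k - 1)).2) * (γ t k).1
      = -(gD γ t k + gD γ t (k - 1)) := by
    simp only [gD, det2, hk1]
    ring
  rw [hgg]
  ring
end
end

section
/- Let γ : ℝ → ℤ → ℂ² be a flow on discrete curves with coefficients α, β, and assume g_k(t) ≠ 0 and u_k(t) ≠ 0 for all t,k. Define the 2×2 complex matrices F_k with first row γ_k and second row γ_{k−1}, L_k = [[u_k/g_{k−1}, −g_k/g_{k−1}], [1, 0]], and V_k = [[α_k + β_k/g_{k−1}, −(1 + g_k/g_{k−1})·β_k/u_k], [(1 + g_{k−2}/g_{k−1})·β_{k−1}/u_{k−1}, α_{k−1} − β_{k−1}/g_{k−1}]]. Then for all t and k: (i) F_{k+1} = L_k·F_k, (ii) ∂_t F_k = V_k·F_k, and (iii)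 the zero curvature (compatibility) equation ∂_t L_k = V_{k+1}·L_k − L_k·V_k holds. -/
noncomputable section

set_option maxHeartbeats 1000000

/-- The frame matrix `F_k` with first row `γ_k` and second row `γ_{k-1}`. -/
def FM (γ : ℝ → ℤ → ℂ × ℂ) (t : ℝ) (k : ℤ) : Matrix (Fin 2) (Fin 2) ℂ :=
  !![(γ t k).1, (γ t k).2; (γ t (k - 1)).1, (γ t (k - 1)).2]

/-- The transition matrix `L_k`. -/
def LM (γ : ℝ → ℤ → ℂ × ℂ) (t : ℝ) (k : ℤ) : Matrix (Fin 2) (Fin 2) ℂ :=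
  !![uD γ t k / gD γ t (k - 1), -(gD γ t k / gD γ t (k - 1)); 1, 0]

/-- The flow matrix `V_k`. -/
def VM (γ : ℝ → ℤ → ℂ × ℂ) (α β : ℝ → ℤ → ℂ) (t : ℝ) (k : ℤ) : Matrix (Fin 2) (Fin 2) ℂ :=
  !![α t k + β t k / gD γ t (k - 1),
      -((1 + gD γ t k / gD γ t (k - 1)) * (β t k / uD γ t k));
    (1 + gD γ t (k - 2) / gD γ t (k - 1)) * (β t (k - 1) / uD γ t (k - 1)),
      α t (k - 1) - β t (k - 1) / gD γ t (k - 1)]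

/-- For a flow `∂_t γ_k = α_k γ_k + (β_k/u_k)(γ_{k+1} - γ_{k-1})` on discrete curves in `ℂ²`
with `g_k ≠ 0` and `u_k ≠ 0`: (i) `F_{k+1} = L_k F_k`, (ii) `∂_t F_k = V_k F_k` (entrywise),
and (iii) the zero curvature equation `∂_t L_k = V_{k+1} L_k - L_k V_k` (entrywise). -/
theorem stmt5 (γ : ℝ → ℤ → ℂ × ℂ) (α β : ℝ → ℤ → ℂ)
    (hg : ∀ (t : ℝ) (k : ℤ), gD γ t k ≠ 0)
    (hu : ∀ (t : ℝ) (k : ℤ), uD γ t k ≠ 0)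
    (hflow : ∀ (t : ℝ) (k : ℤ), HasDerivAt (fun s => γ s k)
      (α t k • γ t k + (β t k / uD γ t k) • (γ t (k + 1) - γ t (k - 1))) t) :
    (∀ (t : ℝ) (k : ℤ), FM γ t (k + 1) = LM γ t k * FM γ t k) ∧
    (∀ (t : ℝ) (k : ℤ) (i j : Fin 2),
      HasDerivAt (fun s => FM γ s k i j) ((VM γ α β t k * FM γ t k) i j) t) ∧
    (∀ (t : ℝ) (k : ℤ) (i j : Fin 2),
      HasDerivAt (fun s => LM γ s k i j)
        ((VM γ α β t (k + 1) * LM γ t k - LM γ t k * VM γ α β t k) i j) t) := by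
  have hd1 : ∀ (t : ℝ) (k : ℤ), HasDerivAt (fun s => (γ s k).1)
      (α t k * (γ t k).1 + β t k / uD γ t k * ((γ t (k+1)).1 - (γ t (k-1)).1)) t := by
    intro t k; simpa [smul_eq_mul, Function.comp_def] using (hasFDerivAt_fst.comp_hasDerivAt t (hflow t k))
  have hd2 : ∀ (t : ℝ) (k : ℤ), HasDerivAt (fun s => (γ s k).2)
      (α t k * (γ t k).2 + β t k / uD γ t k * ((γ t (k+1)).2 - (γ t (k-1)).2)) t := by
    intro t k; simpa [smul_eq_mul, Function.comp_def] using (hasFDerivAt_snd.comp_hasDerivAt t (hflow t k))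
  refine ⟨?_, ?_, ?_⟩
  · -- (i) F_{k+1} = L_k F_k
    intro t k
    have e1 : k + 1 - 1 = k := by ring
    have h := hg t (k-1)
    simp only [gD, det2, show k - 1 + 1 = k from by ring] at h
    ext i j
    fin_cases i <;> fin_cases j <;>
      simp only [FM, LM, Matrix.mul_apply, Fin.sum_univ_two, Matrix.cons_val',
        Matrix.cons_val_zero, Matrix.cons_val_one, Matrix.head_cons, Matrix.empty_val',
        Matrix.cons_val_fin_one, Matrix.head_fin_const, Matrix.of_apply, e1, Fin.zero_eta,
        Fin.mk_one, Fin.isValue, one_mul, zero_mul, add_zero] <;>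
      · simp only [gD, uD, det2, show k - 1 + 1 = k from by ring]
        field_simp at h ⊢
        try ring
  · -- (ii) ∂_t F_k = V_k F_k
    intro t k i j
    have hG := hg t (k-1)
    have hU := hu t k
    have hU' := hu t (k-1)
    simp only [gD, uD, det2, show k - 1 + 1 = k from by ring,
      show k-1-1 = k-2 from by ring] at hG hU hU'
    fin_cases i <;> fin_cases j <;>
    · simp only [FM, VM, Matrix.mul_apply, Fin.sum_univ_two, Matrix.cons_val',
        Matrix.cons_val_zero, Matrix.cons_val_one, Matrix.head_cons, Matrix.empty_val',
        Matrix.cons_val_fin_one, Matrix.head_fin_const, Matrix.of_apply, Fin.zero_eta,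
        Fin.mk_one, Fin.isValue]
      first
      | refine (hd1 t k).congr_deriv ?_ | refine (hd2 t k).congr_deriv ?_
      | refine (hd1 t (k-1)).congr_deriv ?_ | refine (hd2 t (k-1)).congr_deriv ?_
      simp only [gD, uD, det2, show k - 1 + 1 = k from by ring, show k-1-1 = k-2 from by ring,
        show k-2+1 = k-1 from by ring]
      field_simp at hG hU hU' ⊢
      try ring
  · -- (iii) zero curvature
    intro t k i j
    have Hg : ∀ (m : ℤ), HasDerivAt (fun s => gD γ s m)
        ((α t m + α t (m+1)) * gD γ t m - β t m + β t (m+1)) t := by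
      intro m
      have hUm := hu t m; have hUm1 := hu t (m+1)
      simp only [uD, det2, show m - 1 + 1 = m from by ring, show m + 1 - 1 = m from by ring,
        show m + 1 + 1 = m + 2 from by ring] at hUm hUm1 ⊢
      refine (((hd1 t m).mul (hd2 t (m+1))).sub ((hd2 t m).mul (hd1 t (m+1)))).congr_deriv ?_
      simp only [gD, uD, det2, smul_eq_mul, show m - 1 + 1 = m from by ring,
        show m + 1 - 1 = m from by ring, show m + 1 + 1 = m + 2 from by ring]
      field_simp [hUm, hUm1]
      ring
    have Hu : ∀ (m : ℤ), HasDerivAt (fun s => uD γ s m)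
        ((α t (m-1) + α t (m+1)) * uD γ t m
          + β t (m-1) * (gD γ t (m-1) * gD γ t m - uD γ t (m-1) * uD γ t m
              + gD γ t (m-2) * gD γ t m) / (uD γ t (m-1) * gD γ t (m-1))
          + β t (m+1) * (uD γ t m * uD γ t (m+1) - gD γ t (m-1) * gD γ t (m+1)
              - gD γ t (m-1) * gD γ t m) / (uD γ t (m+1) * gD γ t m)) t := by
      intro m
      have hUa := hu t (m-1); have hUb := hu t (m+1)
      have hGa := hg t (m-1); have hGb := hg t m
      simp only [gD, uD, det2, show m - 1 + 1 = m from by ring, show m + 1 - 1 = m from by ring,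
        show m + 1 + 1 = m + 2 from by ring, show m - 1 - 1 = m - 2 from by ring,
        show m - 2 + 1 = m - 1 from by ring] at hUa hUb hGa hGb ⊢
      refine (((hd1 t (m-1)).mul (hd2 t (m+1))).sub
        ((hd2 t (m-1)).mul (hd1 t (m+1)))).congr_deriv ?_
      simp only [gD, uD, det2, smul_eq_mul, show m - 1 + 1 = m from by ring,
        show m + 1 - 1 = m from by ring, show m + 1 + 1 = m + 2 from by ring,
        show m - 1 - 1 = m - 2 from by ring, show m - 2 + 1 = m - 1 from by ring]
      field_simp at hUa hUb hGa hGb ⊢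
      ring
    have e1 : k - 1 + 1 = k := by ring
    have e2 : k - 1 - 1 = k - 2 := by ring
    have e4 : k + 1 - 1 = k := by ring
    have e6 : k + 1 - 2 = k - 1 := by ring
    have hG := hg t (k-1); have hGk := hg t k
    have hU' := hu t (k-1); have hU := hu t k; have hU2 := hu t (k+1)
    fin_cases i <;> fin_cases j <;>
      simp only [LM, VM, Matrix.sub_apply, Matrix.mul_apply, Fin.sum_univ_two, Matrix.cons_val',
        Matrix.cons_val_zero, Matrix.cons_val_one, Matrix.head_cons, Matrix.empty_val',
        Matrix.cons_val_fin_one, Matrix.head_fin_const, Matrix.of_apply, Fin.zero_eta,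
        Fin.mk_one, Fin.isValue, e1, e2, e4, e6]
    · refine ((Hu k).div (Hg (k-1)) hG).congr_deriv ?_
      simp only [e1, e2, e4, e6]
      set G0 := gD γ t (k-2); set G1 := gD γ t (k-1); set G2 := gD γ t k; set G3 := gD γ t (k+1)
      set U1 := uD γ t (k-1); set U2 := uD γ t k; set U3 := uD γ t (k+1)
      clear_value G0 G1 G2 G3 U1 U2 U3
      have hiG1 : G1 * G1⁻¹ = 1 := mul_inv_cancel₀ hG
      have hiG2 : G2 * G2⁻¹ = 1 := mul_inv_cancel₀ hGk
      have hiU1 : U1 * U1⁻¹ = 1 := mul_inv_cancel₀ hU'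
      have hiU3 : U3 * U3⁻¹ = 1 := mul_inv_cancel₀ hU2
      simp only [div_eq_mul_inv, mul_inv, inv_pow]
      linear_combination
        (U2 * α t (k+1) * G1⁻¹ + (-1) * U2 * α t k * G1⁻¹
          + U2 * U3 * β t (k+1) * G1⁻¹ * G2⁻¹ * U3⁻¹
          + (-1) * U1 * U2 * β t (k-1) * G1⁻¹ ^ 2 * U1⁻¹
          + (-1) * G3 * β t (k+1) * G2⁻¹ * U3⁻¹ + (-1) * G2 * β t (k+1) * G2⁻¹ * U3⁻¹
          + G2 * β t (k-1) * G1⁻¹ * U1⁻¹ + (-1) * G1 * G3 * β t (k+1) * G1⁻¹ * G2⁻¹ * U3⁻¹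
          + (-1) * G1 * G2 * β t (k+1) * G1⁻¹ * G2⁻¹ * U3⁻¹
          + G1 * G2 * β t (k-1) * G1⁻¹ ^ 2 * U1⁻¹
          + G0 * G2 * β t (k-1) * G1⁻¹ ^ 2 * U1⁻¹) * hiG1
        + ((-1) * β t (k+1) * U3⁻¹) * hiG2
        + ((-1) * U2 * β t (k-1) * G1⁻¹ ^ 2) * hiU1
        + (U2 * β t (k+1) * G1⁻¹ * G2⁻¹) * hiU3
    · refine (((Hg k).div (Hg (k-1)) hG).neg).congr_deriv ?_
      simp only [e1, e2, e4, e6]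
      set G0 := gD γ t (k-2); set G1 := gD γ t (k-1); set G2 := gD γ t k; set G3 := gD γ t (k+1)
      set U1 := uD γ t (k-1); set U2 := uD γ t k; set U3 := uD γ t (k+1)
      clear_value G0 G1 G2 G3 U1 U2 U3
      have hiG1 : G1 * G1⁻¹ = 1 := mul_inv_cancel₀ hG
      have hiG2 : G2 * G2⁻¹ = 1 := mul_inv_cancel₀ hGk
      have hiU2 : U2 * U2⁻¹ = 1 := mul_inv_cancel₀ hU
      simp only [div_eq_mul_inv, mul_inv, inv_pow]
      linear_combination
        ((-1) * β t (k+1) * G1⁻¹ + β t k * G1⁻¹ + (-1) * G2 * α t (k+1) * G1⁻¹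
          + G2 * α t (k-1) * G1⁻¹) * hiG1
        + (β t (k+1) * G1⁻¹) * hiG2
        + ((-1) * β t k * G1⁻¹ + (-1) * G2 * β t k * G1⁻¹ ^ 2) * hiU2
    · refine (hasDerivAt_const t (1:ℂ)).congr_deriv ?_
      set G0 := gD γ t (k-2); set G1 := gD γ t (k-1); set G2 := gD γ t k; set G3 := gD γ t (k+1)
      set U1 := uD γ t (k-1); set U2 := uD γ t k; set U3 := uD γ t (k+1)
      clear_value G0 G1 G2 G3 U1 U2 U3
      field_simp [hG, hGk, hU', hU, hU2]
      try ring
    · refine (hasDerivAt_const t (0:ℂ)).congr_deriv ?_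
      set G0 := gD γ t (k-2); set G1 := gD γ t (k-1); set G2 := gD γ t k; set G3 := gD γ t (k+1)
      set U1 := uD γ t (k-1); set U2 := uD γ t k; set U3 := uD γ t (k+1)
      clear_value G0 G1 G2 G3 U1 U2 U3
      field_simp [hG, hGk, hU', hU, hU2]
      try ring
end
end

section
/- Let γ : ℝ → ℤ → ℂ² be a flow on discrete curves that is conformal arc length parametrized for all times, i.e. g_k(t) = det(γ_k(t),γ_{k+1}(t)) = 1 for all t,k, with u_k(t) ≠ 0 for all t,k, and suppose γ evolves by the conformal tangential flow ∂_t γ_k = (1/(2u_k))(γ_{k+1} − γ_{k−1}) (i.e. α ≡ 0, β ≡ 1/2). Then for all t and k: ∂_t u_k = 1/u_{k−1} − 1/u_{k+1}, and the cross-ratios Q_k = 1/(u_k u_{k+1}) satisfy the Volterra equation ∂_t Q_k = Q_k·(Q_{k+1} − Q_{k−1}). -/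
noncomputable section

/-- The cross-ratio in the conformal arc length parametrized case `g ≡ 1`:
`Q_k = 1/(u_k u_{k+1})`. -/
def QV (γ : ℝ → ℤ → ℂ × ℂ) (t : ℝ) (k : ℤ) : ℂ := (uD γ t k * uD γ t (k + 1))⁻¹

lemma plucker (a b c d : ℂ × ℂ) :
    det2 a b * det2 c d - det2 a c * det2 b d + det2 a d * det2 b c = 0 := by
  unfold det2; ring

/-- For the conformal tangential flow `∂_t γ_k = (1/(2u_k))(γ_{k+1} - γ_{k-1})` on a
conformal arc length parametrized curve (`g_k = 1`, `u_k ≠ 0`), one has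
`∂_t u_k = 1/u_{k-1} - 1/u_{k+1}` and the cross-ratios `Q_k = 1/(u_k u_{k+1})` satisfy
the Volterra equation `∂_t Q_k = Q_k (Q_{k+1} - Q_{k-1})`. -/
theorem stmt6 (γ : ℝ → ℤ → ℂ × ℂ)
    (hg : ∀ (t : ℝ) (k : ℤ), gD γ t k = 1)
    (hu : ∀ (t : ℝ) (k : ℤ), uD γ t k ≠ 0)
    (hflow : ∀ (t : ℝ) (k : ℤ), HasDerivAt (fun s => γ s k)
      ((1 / (2 * uD γ t k)) • (γ t (k + 1) - γ t (k - 1))) t) :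
    ∀ (t : ℝ) (k : ℤ),
      HasDerivAt (fun s => uD γ s k) ((uD γ t (k - 1))⁻¹ - (uD γ t (k + 1))⁻¹) t ∧
      HasDerivAt (fun s => QV γ s k) (QV γ t k * (QV γ t (k + 1) - QV γ t (k - 1))) t := by
  have key : ∀ (t : ℝ) (k : ℤ), HasDerivAt (fun s => uD γ s k)
      ((uD γ t (k - 1))⁻¹ - (uD γ t (k + 1))⁻¹) t := by
    intro t k
    have hb := hflow t (k - 1)
    have hd := hflow t (k + 1)
    rw [show k - 1 + 1 = k from by ring, show k - 1 - 1 = k - 2 from by ring] at hb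
    rw [show k + 1 + 1 = k + 2 from by ring, show k + 1 - 1 = k from by ring] at hd
    have um : uD γ t (k - 1) = det2 (γ t (k - 2)) (γ t k) := by
      rw [uD, show k - 1 - 1 = k - 2 from by ring, show k - 1 + 1 = k from by ring]
    have up : uD γ t (k + 1) = det2 (γ t k) (γ t (k + 2)) := by
      rw [uD, show k + 1 - 1 = k from by ring, show k + 1 + 1 = k + 2 from by ring]
    rw [um] at hb
    rw [up] at hd
    set A := γ t (k - 2) with hA
    set B := γ t (k - 1) with hB
    set C := γ t k with hC
    set D := γ t (k + 1) with hD
    set E := γ t (k + 2) with hE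
    have hab : det2 A B = 1 := by
      have := hg t (k - 2); rwa [gD, show k - 2 + 1 = k - 1 from by ring] at this
    have hbc : det2 B C = 1 := by
      have := hg t (k - 1); rwa [gD, show k - 1 + 1 = k from by ring] at this
    have hcd : det2 C D = 1 := by have := hg t k; rwa [gD] at this
    have hde : det2 D E = 1 := by
      have := hg t (k + 1); rwa [gD, show k + 1 + 1 = k + 2 from by ring] at this
    have hum : det2 A C ≠ 0 := by have := hu t (k - 1); rwa [um] at this
    have hup : det2 C E ≠ 0 := by have := hu t (k + 1); rwa [up] at this
    have hw : det2 A D = det2 A C * det2 B D - 1 := by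
      have P := plucker A B C D
      rw [hab, hcd, hbc] at P
      linear_combination P
    have hv : det2 B E = det2 B D * det2 C E - 1 := by
      have P := plucker B C D E
      rw [hbc, hde, hcd] at P
      linear_combination P
    have hb1 : HasDerivAt (fun s => (γ s (k - 1)).1) (((1 / (2 * det2 A C)) • (C - A)).1) t := hb.fst
    have hb2 : HasDerivAt (fun s => (γ s (k - 1)).2) (((1 / (2 * det2 A C)) • (C - A)).2) t := hb.snd
    have hd1 : HasDerivAt (fun s => (γ s (k + 1)).1) (((1 / (2 * det2 C E)) • (E - C)).1) t := hd.fst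
    have hd2 : HasDerivAt (fun s => (γ s (k + 1)).2) (((1 / (2 * det2 C E)) • (E - C)).2) t := hd.snd
    have h1 := (hb1.mul hd2).sub (hb2.mul hd1)
    have heq : (fun s => uD γ s k) = fun s =>
        (γ s (k - 1)).1 * (γ s (k + 1)).2 - (γ s (k - 1)).2 * (γ s (k + 1)).1 := by
      funext s; simp only [uD, det2]
    rw [heq, um, up]
    convert h1 using 1
    · rfl
    · rfl
    rw [← hB, ← hD]
    have e1 : ((1 / (2 * det2 A C)) • (C - A)).1 * D.2 + B.1 * ((1 / (2 * det2 C E)) • (E - C)).2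
        - (((1 / (2 * det2 A C)) • (C - A)).2 * D.1 + B.2 * ((1 / (2 * det2 C E)) • (E - C)).1)
        = 1 / (2 * det2 A C) * (det2 C D - det2 A D)
          + 1 / (2 * det2 C E) * (det2 B E - det2 B C) := by
      simp only [det2, Prod.smul_fst, Prod.smul_snd, Prod.fst_sub, Prod.snd_sub, smul_eq_mul]
      ring
    rw [e1, hcd, hw, hv, hbc]
    field_simp
    ring
  intro t k
  refine ⟨key t k, ?_⟩
  have h1 := key t k
  have h2 := key t (k + 1)
  rw [show k + 1 - 1 = k from by ring, show k + 1 + 1 = k + 2 from by ring] at h2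
  have hm := h1.mul h2
  have hne : uD γ t k * uD γ t (k + 1) ≠ 0 := mul_ne_zero (hu t k) (hu t (k + 1))
  have hQ : (fun s => QV γ s k) = fun s => 1 / (uD γ s k * uD γ s (k + 1)) := by
    funext s; rw [QV, one_div]
  rw [hQ]
  have h3 := (hasDerivAt_const t (1:ℂ)).div hm hne
  convert h3 using 1
  · rfl
  · rfl
  rw [QV, QV, QV, show k + 1 + 1 = k + 2 from by ring, show k - 1 + 1 = k from by ring]
  have h0 := hu t k
  have hm1 := hu t (k - 1)
  have hp1 := hu t (k + 1)
  have hp2 := hu t (k + 2)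
  simp only [Pi.mul_apply]
  field_simp
  ring
end
end

section
/- Let γ : ℝ → ℤ → ℂ² be a flow on discrete curves with coefficients α, β such that g_k(t) = det(γ_k(t),γ_{k+1}(t)) = 1 and u_k(t) ≠ 0 for all t,k, and such that β_k = (Q_{k−1} + Q_k + 1)/2 where Q_k = 1/(u_k u_{k+1}). Then the cross-ratios satisfy the second flow of the Volterra hierarchy: ∂_t Q_k = Q_k·(Q_{k+1}(Q_{k+2} + Q_{k+1} + Q_k) − Q_{k−1}(Q_k + Q_{k−1} + Q_{k−2})) for all t and k. -/
set_option maxHeartbeats 1000000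


noncomputable section

lemma det2_deriv {f h : ℝ → ℂ × ℂ} {f' h' : ℂ × ℂ} {t : ℝ}
    (hf : HasDerivAt f f' t) (hh : HasDerivAt h h' t) :
    HasDerivAt (fun s => det2 (f s) (h s)) (det2 f' (h t) + det2 (f t) h') t := by
  have hf1 : HasDerivAt (fun s => (f s).1) f'.1 t :=
    ((ContinuousLinearMap.fst ℝ ℂ ℂ).hasFDerivAt.comp_hasDerivAt t hf)
  have hf2 : HasDerivAt (fun s => (f s).2) f'.2 t :=
    ((ContinuousLinearMap.snd ℝ ℂ ℂ).hasFDerivAt.comp_hasDerivAt t hf)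
  have hh1 : HasDerivAt (fun s => (h s).1) h'.1 t :=
    ((ContinuousLinearMap.fst ℝ ℂ ℂ).hasFDerivAt.comp_hasDerivAt t hh)
  have hh2 : HasDerivAt (fun s => (h s).2) h'.2 t :=
    ((ContinuousLinearMap.snd ℝ ℂ ℂ).hasFDerivAt.comp_hasDerivAt t hh)
  have := (hf1.mul hh2).sub (hf2.mul hh1)
  convert this using 1
  · rfl
  · rfl
  simp [det2]; ring

lemma det2_expandL (x y : ℂ) (a b z c : ℂ × ℂ) :
    det2 (x • a + y • (b - z)) c = x * det2 a c + y * det2 b c - y * det2 z c := by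
  simp [det2, Prod.smul_def]; ring

lemma det2_expandR (x y : ℂ) (a b z c : ℂ × ℂ) :
    det2 c (x • a + y • (b - z)) = x * det2 c a + y * det2 c b - y * det2 c z := by
  simp [det2, Prod.smul_def]; ring

lemma det2_self (a : ℂ × ℂ) : det2 a a = 0 := by simp [det2]; ring

/-- For a flow `∂_t γ_k = α_k γ_k + (β_k/u_k)(γ_{k+1} - γ_{k-1})` on a conformal arc length
parametrized curve (`g_k = 1`, `u_k ≠ 0`) with `β_k = (Q_{k-1} + Q_k + 1)/2`, the cross-ratios
satisfy the second flow of the Volterra hierarchy: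
`∂_t Q_k = Q_k (Q_{k+1}(Q_{k+2} + Q_{k+1} + Q_k) - Q_{k-1}(Q_k + Q_{k-1} + Q_{k-2}))`. -/
theorem stmt7 (γ : ℝ → ℤ → ℂ × ℂ) (α β : ℝ → ℤ → ℂ)
    (hg : ∀ (t : ℝ) (k : ℤ), gD γ t k = 1)
    (hu : ∀ (t : ℝ) (k : ℤ), uD γ t k ≠ 0)
    (hβ : ∀ (t : ℝ) (k : ℤ), β t k = (QV γ t (k - 1) + QV γ t k + 1) / 2)
    (hflow : ∀ (t : ℝ) (k : ℤ), HasDerivAt (fun s => γ s k)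
      (α t k • γ t k + (β t k / uD γ t k) • (γ t (k + 1) - γ t (k - 1))) t) :
    ∀ (t : ℝ) (k : ℤ),
      HasDerivAt (fun s => QV γ s k)
        (QV γ t k *
          (QV γ t (k + 1) * (QV γ t (k + 2) + QV γ t (k + 1) + QV γ t k)
            - QV γ t (k - 1) * (QV γ t k + QV γ t (k - 1) + QV γ t (k - 2)))) t := by
  intro t k
  have hgd : ∀ m : ℤ, det2 (γ t m) (γ t (m + 1)) = 1 := fun m => hg t m
  have hgd' : ∀ m : ℤ, det2 (γ t (m - 1)) (γ t m) = 1 := by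
    intro m; have := hgd (m - 1); rwa [show m - 1 + 1 = m by ring] at this
  have hud : ∀ m : ℤ, det2 (γ t (m - 1)) (γ t (m + 1)) = uD γ t m := fun m => rfl
  have hw : ∀ m : ℤ, det2 (γ t (m - 1)) (γ t (m + 2)) = uD γ t m * uD γ t (m + 1) - 1 := by
    intro m
    have hp := plucker (γ t (m - 1)) (γ t m) (γ t (m + 1)) (γ t (m + 2))
    rw [hgd' m, hgd m, hud m] at hp
    have g2 : det2 (γ t (m + 1)) (γ t (m + 2)) = 1 := by
      have := hgd (m + 1); rwa [show m + 1 + 1 = m + 2 by ring] at this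
    have h2 : det2 (γ t m) (γ t (m + 2)) = uD γ t (m + 1) := by
      have := hud (m + 1)
      rwa [show m + 1 - 1 = m by ring, show m + 1 + 1 = m + 2 by ring] at this
    rw [g2, h2] at hp
    linear_combination hp
  have hw' : ∀ m : ℤ, det2 (γ t (m - 2)) (γ t (m + 1)) = uD γ t (m - 1) * uD γ t m - 1 := by
    intro m
    have := hw (m - 1)
    rwa [show m - 1 - 1 = m - 2 by ring, show m - 1 + 2 = m + 1 by ring,
      show m - 1 + 1 = m by ring] at this
  -- derivative of uD, in Q-form
  have hU : ∀ j : ℤ, HasDerivAt (fun s => uD γ s j)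
      (uD γ t j * (α t (j - 1) + α t (j + 1)
        + β t (j - 1) * (2 * QV γ t (j - 1) - 1)
        + β t (j + 1) * (1 - 2 * QV γ t j))) t := by
    intro j
    have h := det2_deriv (hflow t (j - 1)) (hflow t (j + 1))
    simp only [show j - 1 + 1 = j by ring, show j - 1 - 1 = j - 2 by ring,
      show j + 1 + 1 = j + 2 by ring, show j + 1 - 1 = j by ring] at h
    convert h using 1
    · rfl
    rw [det2_expandL, det2_expandR, hud j, hgd j, hw' j, hgd' j, hw j]
    have hq1 : QV γ t (j - 1) = (uD γ t (j - 1) * uD γ t j)⁻¹ := by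
      unfold QV; rw [show j - 1 + 1 = j by ring]
    have hq2 : QV γ t j = (uD γ t j * uD γ t (j + 1))⁻¹ := rfl
    rw [hq1, hq2]
    have c1 : uD γ t (j - 1) * (uD γ t (j - 1))⁻¹ = 1 := mul_inv_cancel₀ (hu t (j - 1))
    have c2 : uD γ t j * (uD γ t j)⁻¹ = 1 := mul_inv_cancel₀ (hu t j)
    have c3 : uD γ t (j + 1) * (uD γ t (j + 1))⁻¹ = 1 := mul_inv_cancel₀ (hu t (j + 1))
    linear_combination (2 * β t (j - 1) * (uD γ t (j - 1))⁻¹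
        - 2 * β t (j + 1) * (uD γ t (j + 1))⁻¹) * c2
      + (β t (j - 1) * uD γ t j) * c1 - (β t (j + 1) * uD γ t j) * c3
  -- constraint on α from g constant
  have hα : ∀ j : ℤ, α t j + α t (j + 1) = β t j - β t (j + 1) := by
    intro j
    have h := det2_deriv (hflow t j) (hflow t (j + 1))
    simp only [show j + 1 + 1 = j + 2 by ring, show j + 1 - 1 = j by ring] at h
    have hc : HasDerivAt (fun s => det2 (γ s j) (γ s (j + 1))) 0 t := by
      have he : (fun s => det2 (γ s j) (γ s (j + 1))) = fun _ => (1 : ℂ) :=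
        funext fun s => hg s j
      rw [he]; exact hasDerivAt_const t 1
    have h0 := h.unique hc
    rw [det2_expandL, det2_expandR, hgd j, det2_self, det2_self, hud j] at h0
    have h1 : det2 (γ t j) (γ t (j + 2)) = uD γ t (j + 1) := by
      have := hud (j + 1)
      rwa [show j + 1 - 1 = j by ring, show j + 1 + 1 = j + 2 by ring] at this
    rw [h1] at h0
    field_simp [hu t j, hu t (j + 1)] at h0
    have hne := mul_ne_zero (hu t j) (hu t (j + 1))
    apply mul_left_cancel₀ hne
    linear_combination h0
  -- assemble
  have h1 := hU k
  have h2 := hU (k + 1)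
  simp only [show k + 1 - 1 = k by ring, show k + 1 + 1 = k + 2 by ring] at h2
  have hm := (hasDerivAt_inv (mul_ne_zero (hu t k) (hu t (k + 1)))).comp t (h1.mul h2)
  have hfun : (fun s => QV γ s k) = fun s => (uD γ s k * uD γ s (k + 1))⁻¹ := rfl
  rw [hfun]
  convert hm using 1
  · rfl
  · rfl
  have e1 : α t k = β t (k - 1) - β t k - α t (k - 1) := by
    have := hα (k - 1)
    rw [show k - 1 + 1 = k by ring] at this
    linear_combination this
  have e2 : α t (k + 2) = β t (k + 1) - β t (k + 2) - α t (k + 1) := by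
    have := hα (k + 1)
    rw [show k + 1 + 1 = k + 2 by ring] at this
    linear_combination this
  rw [e1, e2, hβ t (k - 1), hβ t k, hβ t (k + 1), hβ t (k + 2)]
  simp only [show k - 1 - 1 = k - 2 by ring, show k - 1 + 1 = k by ring,
    show k + 1 - 1 = k by ring, show k + 1 + 1 = k + 2 by ring,
    show k + 2 - 1 = k + 1 by ring, show k + 2 + 1 = k + 3 by ring]
  rw [show ((uD γ t k * uD γ t (k + 1)) ^ 2)⁻¹ = QV γ t k ^ 2 by rw [← inv_pow]; rfl]
  have hQk : uD γ t k * uD γ t (k + 1) * QV γ t k = 1 :=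
    mul_inv_cancel₀ (mul_ne_zero (hu t k) (hu t (k + 1)))
  linear_combination
    (QV γ t k *
      (((QV γ t (k - 2) + QV γ t (k - 1) + 1) / 2 - (QV γ t (k - 1) + QV γ t k + 1) / 2
          + (QV γ t k + QV γ t (k + 1) + 1) / 2 - (QV γ t (k + 1) + QV γ t (k + 2) + 1) / 2)
        + (QV γ t (k - 2) + QV γ t (k - 1) + 1) / 2 * (2 * QV γ t (k - 1) - 1)
        + (QV γ t k + QV γ t (k + 1) + 1) / 2 * (1 - 2 * QV γ t k)
        + (QV γ t (k - 1) + QV γ t k + 1) / 2 * (2 * QV γ t k - 1)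
        + (QV γ t (k + 1) + QV γ t (k + 2) + 1) / 2 * (1 - 2 * QV γ t (k + 1)))) * hQk
end
end

section
/- Let c : ℤ → ℂ be a discrete arc length parametrized curve with S_{k−1} + S_k ≠ 0 for all k, with real curvature κ. For coefficients β : ℤ → ℂ, the induced edge variation is D_k = β_{k+1}·M^h(S_k,S_{k+1}) − β_k·M^h(S_{k−1},S_k). Then ⟨S_k, D_k⟩ = 0 for all k in both of the following cases: (i) the tangential flow β_k = 2 for all k; (ii) the mKdV flow β_k = (Q_{k−1} + Q_k + 1)/2. In other words, the discrete tangential flow and the discrete mKdV flow both preserve the discrete arc length parameterization. -/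
noncomputable section

open Complex

/-- Edge vectors `S_k = c_{k+1} - c_k` of a discrete curve in `ℂ`. -/
def SE (c : ℤ → ℂ) (k : ℤ) : ℂ := c (k + 1) - c k

/-- Harmonic mean `M^h(a,b) = 2ab/(a+b)`. -/
def Mh (a b : ℂ) : ℂ := 2 * a * b / (a + b)

/-- `Q_k = S_{k-1}S_{k+1}/((S_{k-1} + S_k)(S_k + S_{k+1}))`. -/
def QE (c : ℤ → ℂ) (k : ℤ) : ℂ :=
  SE c (k - 1) * SE c (k + 1) / ((SE c (k - 1) + SE c k) * (SE c k + SE c (k + 1)))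

/-- The real scalar product `⟨x,y⟩ = Re(x ⬝ conj y)` on `ℂ`. -/
def inn (x y : ℂ) : ℝ := (x * (starRingEnd ℂ) y).re

/-- The edge variation `D_k = β_{k+1} M^h(S_k,S_{k+1}) - β_k M^h(S_{k-1},S_k)` induced by a
flow `∂_t c_k = β_k M^h(S_{k-1},S_k)`. -/
def DE (c : ℤ → ℂ) (β : ℤ → ℂ) (k : ℤ) : ℂ :=
  β (k + 1) * Mh (SE c k) (SE c (k + 1)) - β k * Mh (SE c (k - 1)) (SE c k)

/-- If `z + conj z = 0` then `Re z = 0`. -/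
lemma re_zero' {z : ℂ} (h : z + (starRingEnd ℂ) z = 0) : z.re = 0 := by
  have h2 := Complex.add_conj z
  rw [h] at h2
  have h4 : (2 : ℝ) * z.re = 0 := by exact_mod_cast h2.symm
  linarith

/-- Conjugating a harmonic mean of unit vectors. -/
lemma Mh_inv' (p q : ℂ) (hp : p ≠ 0) (hq : q ≠ 0) (hpq : p + q ≠ 0) :
    2 * p⁻¹ * q⁻¹ / (p⁻¹ + q⁻¹) = 2 / (p + q) := by
  rw [inv_add_inv hp hq]
  field_simp

/-- Conjugating a `Q`-factor of unit vectors. -/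
lemma Q_inv' (p q r : ℂ) (hp : p ≠ 0) (hq : q ≠ 0) (hr : r ≠ 0)
    (hpq : p + q ≠ 0) (hqr : q + r ≠ 0) :
    p⁻¹ * r⁻¹ / ((p⁻¹ + q⁻¹) * (q⁻¹ + r⁻¹)) = q ^ 2 / ((p + q) * (q + r)) := by
  rw [inv_add_inv hp hq, inv_add_inv hq hr, div_mul_div_comm, div_div_eq_mul_div]
  congr 1
  field_simp

set_option maxHeartbeats 1000000 in
/-- The key algebraic identity for the mKdV flow. -/
lemma key2' (a b x d e : ℂ) (hx : x ≠ 0)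
    (hab : a + b ≠ 0) (hbx : b + x ≠ 0) (hxd : x + d ≠ 0) (hde : d + e ≠ 0) :
    x *
        ((x ^ 2 / ((b + x) * (x + d)) + d ^ 2 / ((x + d) * (d + e)) + 1) / 2 * (2 / (x + d)) -
          (b ^ 2 / ((a + b) * (b + x)) + x ^ 2 / ((b + x) * (x + d)) + 1) / 2 * (2 / (b + x))) +
      x⁻¹ *
        ((b * d / ((b + x) * (x + d)) + x * e / ((x + d) * (d + e)) + 1) / 2 * (2 * x * d / (x + d)) -
          (a * x / ((a + b) * (b + x)) + b * d / ((b + x) * (x + d)) + 1) / 2 * (2 * b * x / (b + x))) =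
    0 := by
  have h1 : (a + b)⁻¹ * (a + b) = 1 := inv_mul_cancel₀ hab
  have h2 : (b + x)⁻¹ * (b + x) = 1 := inv_mul_cancel₀ hbx
  have h3 : (x + d)⁻¹ * (x + d) = 1 := inv_mul_cancel₀ hxd
  have h4 : (d + e)⁻¹ * (d + e) = 1 := inv_mul_cancel₀ hde
  have h5 : x⁻¹ * x = 1 := inv_mul_cancel₀ hx
  simp only [div_eq_mul_inv, mul_inv]
  linear_combination
    ((-1)*(b+x)⁻¹^2*x⁻¹*b*x^2) * h1 +
    ((-1)*x⁻¹*x + (-1)*(x+d)⁻¹*x⁻¹*x*d + (x+d)⁻¹^2*x⁻¹*x*d^2 + (-1)*(b+x)⁻¹*x⁻¹*x^2 + (b+x)⁻¹*(x+d)⁻¹*x⁻¹*x^2*d + (-1)*(b+x)⁻¹*(x+d)⁻¹*x⁻¹*b*x*d + (-1)*(a+b)⁻¹*x + (a+b)⁻¹*x⁻¹*x^2 + (a+b)⁻¹*(b+x)⁻¹*x^2 + (-1)*(a+b)⁻¹*(b+x)⁻¹*b*x + (-1)*(a+b)⁻¹*(b+x)⁻¹*x⁻¹*x^3 + (a+b)⁻¹*(b+x)⁻¹*x⁻¹*b*x^2)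 * h2 +
    (1 + (-1)*x⁻¹*e + (d+e)⁻¹*x⁻¹*e^2 + (d+e)⁻¹*x⁻¹*d*e + (-1)*(x+d)⁻¹*x⁻¹*e^2 + (x+d)⁻¹*x⁻¹*d*e + (x+d)⁻¹*(d+e)⁻¹*d^2 + (x+d)⁻¹*(d+e)⁻¹*x⁻¹*e^3 + (-1)*(x+d)⁻¹*(d+e)⁻¹*x⁻¹*d^2*e + (x+d)⁻¹*(d+e)⁻¹*x⁻¹*x*d*e + (-2)*(b+x)⁻¹*d + (b+x)⁻¹*x + 2*(b+x)⁻¹*x⁻¹*x*d + (b+x)⁻¹*(x+d)⁻¹*d^2 + (-1)*(b+x)⁻¹*(x+d)⁻¹*x*d + (b+x)⁻¹*(x+d)⁻¹*x^2 + (-1)*(b+x)⁻¹*(x+d)⁻¹*x⁻¹*x*d^2 + (-1)*(b+x)⁻¹^2*d^2 + (b+x)⁻¹^2*x*d + (-1)*(b+x)⁻¹^2*x^2 + (b+x)⁻¹^2*x⁻¹*x*d^2 + (-1)*(b+x)⁻¹^2*x⁻¹*x^2*d) * h3 +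
    (x⁻¹*e + (-1)*(x+d)⁻¹*e + (x+d)⁻¹*d + (x+d)⁻¹*x⁻¹*e^2 + (-2)*(x+d)⁻¹*x⁻¹*d*e + (-1)*(x+d)⁻¹^2*e^2 + (x+d)⁻¹^2*d*e + (-1)*(x+d)⁻¹^2*d^2 + (-1)*(x+d)⁻¹^2*x⁻¹*d*e^2 + (x+d)⁻¹^2*x⁻¹*d^2*e) * h4 +
    ((-1) + (x+d)⁻¹*e + (-1)*(x+d)⁻¹*(d+e)⁻¹*e^2 + (x+d)⁻¹^2*e^2 + (-1)*(x+d)⁻¹^2*d*e + (x+d)⁻¹^2*d^2 + (-1)*(x+d)⁻¹^2*(d+e)⁻¹*e^3 + 2*(b+x)⁻¹*d + (-3)*(b+x)⁻¹*(x+d)⁻¹*d^2 + (b+x)⁻¹*(x+d)⁻¹^2*d^3 + (b+x)⁻¹^2*d^2 + (-1)*(b+x)⁻¹^2*x*d + (b+x)⁻¹^2*x^2 + (-1)*(b+x)⁻¹^2*(x+d)⁻¹*d^3 + (a+b)⁻¹*x + (-2)*(a+b)⁻¹*(b+x)⁻¹*x^2 + (a+b)⁻¹*(b+x)⁻¹^2*x^3)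 * h5

/-- For a discrete arc length parametrized curve `c` in `ℂ` (`|S_k| = 1`, `S_{k-1}+S_k ≠ 0`)
with real curvature `κ`, the edge variation `D_k` satisfies `⟨S_k, D_k⟩ = 0` for all `k` for
(i) the tangential flow `β_k = 2`, and (ii) the mKdV flow `β_k = (Q_{k-1} + Q_k + 1)/2`;
i.e. both flows preserve the discrete arc length parameterization. -/
theorem stmt9 (c : ℤ → ℂ) (κ : ℤ → ℝ)
    (hS1 : ∀ k : ℤ, ‖SE c k‖ = 1)
    (hSsum : ∀ k : ℤ, SE c (k - 1) + SE c k ≠ 0)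
    (hκ : ∀ k : ℤ, SE c k / SE c (k - 1) = (2 * I - (κ k : ℂ)) / (2 * I + (κ k : ℂ))) :
    (∀ k : ℤ, inn (SE c k) (DE c (fun _ => 2) k) = 0) ∧
    (∀ k : ℤ, inn (SE c k) (DE c (fun j => (QE c (j - 1) + QE c j + 1) / 2) k) = 0) := by
  have hz : ∀ k : ℤ, SE c k ≠ 0 := by
    intro k h
    simpa [h] using hS1 k
  have hconj : ∀ k : ℤ, (starRingEnd ℂ) (SE c k) = (SE c k)⁻¹ := by
    intro k
    have h1 : SE c k * (starRingEnd ℂ) (SE c k) = 1 := by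
      rw [Complex.mul_conj, Complex.normSq_eq_norm_sq, hS1]
      norm_num
    exact eq_inv_of_mul_eq_one_left (by linear_combination h1)
  constructor
  · intro k
    have hb := hz (k - 1); have hx := hz k; have hd := hz (k + 1)
    have hbx : SE c (k - 1) + SE c k ≠ 0 := hSsum k
    have hxd : SE c k + SE c (k + 1) ≠ 0 := by
      have := hSsum (k + 1); rwa [show k + 1 - 1 = k from by ring] at this
    unfold inn
    apply re_zero'
    simp only [DE, Mh, map_sub, map_mul, map_add, map_div₀, map_ofNat, map_inv₀,
      Complex.conj_conj, hconj, inv_inv]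
    set b := SE c (k - 1)
    set x := SE c k
    set d := SE c (k + 1)
    have hbx' : b⁻¹ + x⁻¹ ≠ 0 := by
      rw [inv_add_inv hb hx]; exact div_ne_zero hbx (mul_ne_zero hb hx)
    have hxd' : x⁻¹ + d⁻¹ ≠ 0 := by
      rw [inv_add_inv hx hd]; exact div_ne_zero hxd (mul_ne_zero hx hd)
    have hxb : x + b ≠ 0 := by rwa [add_comm] at hbx
    have hdx : d + x ≠ 0 := by rwa [add_comm] at hxd
    field_simp
    ring
  · intro k
    have ha := hz (k - 2); have hb := hz (k - 1); have hx := hz k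
    have hd := hz (k + 1); have he := hz (k + 2)
    have hab : SE c (k - 2) + SE c (k - 1) ≠ 0 := by
      have := hSsum (k - 1); rwa [show k - 1 - 1 = k - 2 from by ring] at this
    have hbx : SE c (k - 1) + SE c k ≠ 0 := hSsum k
    have hxd : SE c k + SE c (k + 1) ≠ 0 := by
      have := hSsum (k + 1); rwa [show k + 1 - 1 = k from by ring] at this
    have hde : SE c (k + 1) + SE c (k + 2) ≠ 0 := by
      have := hSsum (k + 2); rwa [show k + 2 - 1 = k + 1 from by ring] at this
    unfold inn
    apply re_zero'
    simp only [DE, Mh, QE]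
    rw [show k - 1 - 1 = k - 2 from by ring, show k - 1 + 1 = k from by ring,
      show k + 1 - 1 = k from by ring, show k + 1 + 1 = k + 2 from by ring]
    simp only [map_sub, map_mul, map_add, map_div₀, map_ofNat, map_one, map_inv₀,
      Complex.conj_conj, hconj, inv_inv]
    rw [Mh_inv' _ _ hx hd hxd, Mh_inv' _ _ hb hx hbx,
      Q_inv' _ _ _ ha hb hx hab hbx, Q_inv' _ _ _ hb hx hd hbx hxd,
      Q_inv' _ _ _ hx hd he hxd hde]
    exact key2' (SE c (k - 2)) (SE c (k - 1)) (SE c k) (SE c (k + 1)) (SE c (k + 2))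
      hx hab hbx hxd hde
end
end

section
/- Let a, b, v ∈ ℂ² with det(a,b) = 1, det(v,a) ≠ 0, det(v,b) ≠ 0, and let μ ∈ ℂ with μ ≠ 0. Then there exists a unique w ∈ ℂ² such that det(v,w) = 1 and cr(a, b, w, v) = μ (in particular det(b,w) ≠ 0, so the cross-ratio is well defined). Consequently, the Bäcklund transformation step sending a point of a conformal arc length parametrized discrete curve to its transform with cross-ratio parameter μ is well defined and unique. -/
noncomputable section

/-- The cross-ratio `cr(a,b,c,d) = det(a,b)det(c,d)/(det(b,c)det(d,a))` of four points
in `ℂ²`. -/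
def cr (a b c d : ℂ × ℂ) : ℂ := det2 a b * det2 c d / (det2 b c * det2 d a)

/-- Given `a, b, v ∈ ℂ²` with `det(a,b) = 1`, `det(v,a) ≠ 0`, `det(v,b) ≠ 0` and `μ ≠ 0`,
there is a unique `w ∈ ℂ²` with `det(v,w) = 1` and `cr(a,b,w,v) = μ` (in particular
`det(b,w) ≠ 0`, so the cross-ratio is well defined): the Bäcklund transformation step
is well defined and unique. -/
theorem stmt10 (a b v : ℂ × ℂ) (μ : ℂ)
    (hab : det2 a b = 1)
    (hva : det2 v a ≠ 0)
    (hvb : det2 v b ≠ 0)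
    (hμ : μ ≠ 0) :
    ∃! w : ℂ × ℂ, det2 v w = 1 ∧ det2 b w ≠ 0 ∧ cr a b w v = μ := by
  have hμva : μ * det2 v a ≠ 0 := mul_ne_zero hμ hva
  obtain ⟨c, hc⟩ : ∃ c : ℂ, c = -(1 / (μ * det2 v a)) := ⟨_, rfl⟩
  have hcmul : c * (μ * det2 v a) = -1 := by
    rw [hc]; field_simp
  have hcne : c ≠ 0 := by
    intro h; rw [h, zero_mul] at hcmul
    exact one_ne_zero (neg_eq_zero.mp hcmul.symm)
  have hvb' : v.1 * b.2 - v.2 * b.1 ≠ 0 := hvb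
  refine ⟨((b.1 - c * v.1) / det2 v b, (b.2 - c * v.2) / det2 v b), ⟨?_, ?_, ?_⟩, ?_⟩
  · show v.1 * ((b.2 - c * v.2) / (v.1 * b.2 - v.2 * b.1))
      - v.2 * ((b.1 - c * v.1) / (v.1 * b.2 - v.2 * b.1)) = 1
    field_simp
    ring
  · have h1 : det2 b ((b.1 - c * v.1) / det2 v b, (b.2 - c * v.2) / det2 v b) = c := by
      show b.1 * ((b.2 - c * v.2) / (v.1 * b.2 - v.2 * b.1))
        - b.2 * ((b.1 - c * v.1) / (v.1 * b.2 - v.2 * b.1)) = c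
      rw [mul_div_assoc', mul_div_assoc', div_sub_div_same, div_eq_iff hvb']
      ring
    rw [h1]; exact hcne
  · have h1 : det2 b ((b.1 - c * v.1) / det2 v b, (b.2 - c * v.2) / det2 v b) = c := by
      show b.1 * ((b.2 - c * v.2) / (v.1 * b.2 - v.2 * b.1))
        - b.2 * ((b.1 - c * v.1) / (v.1 * b.2 - v.2 * b.1)) = c
      rw [mul_div_assoc', mul_div_assoc', div_sub_div_same, div_eq_iff hvb']
      ring
    have h2 : det2 v ((b.1 - c * v.1) / det2 v b, (b.2 - c * v.2) / det2 v b) = 1 := by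
      show v.1 * ((b.2 - c * v.2) / (v.1 * b.2 - v.2 * b.1))
        - v.2 * ((b.1 - c * v.1) / (v.1 * b.2 - v.2 * b.1)) = 1
      field_simp
      ring
    have h3 : det2 ((b.1 - c * v.1) / det2 v b, (b.2 - c * v.2) / det2 v b) v = -1 := by
      have heq : det2 ((b.1 - c * v.1) / det2 v b, (b.2 - c * v.2) / det2 v b) v
          = -det2 v ((b.1 - c * v.1) / det2 v b, (b.2 - c * v.2) / det2 v b) := by
        simp only [det2]; ring
      rw [heq, h2]
    rw [cr, hab, h1, h3]
    rw [div_eq_iff (mul_ne_zero hcne hva)]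
    linear_combination -hcmul
  · rintro w ⟨hvw, hbw, hcr⟩
    have hwv : det2 w v = -det2 v w := by simp only [det2]; ring
    rw [cr, hab, hwv, hvw] at hcr
    rw [div_eq_iff (mul_ne_zero hbw hva)] at hcr
    have hbwc : det2 b w = c := by
      refine mul_right_cancel₀ hμva ?_
      rw [hcmul]; linear_combination -hcr
    have e1 : v.1 * w.2 - v.2 * w.1 = 1 := hvw
    have e2 : b.1 * w.2 - b.2 * w.1 = c := hbwc
    have hw1 : w.1 = (b.1 - c * v.1) / det2 v b := by
      rw [eq_div_iff hvb]
      show w.1 * (v.1 * b.2 - v.2 * b.1) = b.1 - c * v.1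
      linear_combination b.1 * e1 - v.1 * e2
    have hw2 : w.2 = (b.2 - c * v.2) / det2 v b := by
      rw [eq_div_iff hvb]
      show w.2 * (v.1 * b.2 - v.2 * b.1) = b.2 - c * v.2
      linear_combination b.2 * e1 - v.2 * e2
    exact Prod.ext hw1 hw2
end
end

section
/- Let μ ∈ ℂ, h = μ − 1, and let Q, Q̃, s : ℤ → ℂ be sequences with Q_k ≠ 0, s_k ≠ 0, s_k ≠ 1 for all k, satisfying Q̃_k = Q_k·(s_k/s_{k+1}) and (1 − μ)·Q_k = s_{k+1}/((1 − s_k)(s_{k+1} − 1)) for all k. Define α_k = Q_k, α̃_k = Q̃_{k+1}, and β_k = h·Q_k/s_{k+1}. Then for all k: α̃_k = α_k·(β_{k+1}/β_k) and β_k − h·α_k = β_{k−1}/(β_{k−1} − h·α_{k−1}); that is, the map sending Q_k to Q̃_{k+1} is the discrete-time Volterra model with discretization constant h = μ − 1. -/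
noncomputable section

/-- Let `h = μ - 1` and let `Q, Q̃, s : ℤ → ℂ` with `Q_k ≠ 0`, `s_k ≠ 0`, `s_k ≠ 1`,
satisfying `Q̃_k = Q_k s_k/s_{k+1}` and `(1-μ) Q_k = s_{k+1}/((1-s_k)(s_{k+1}-1))`.
With `α_k = Q_k`, `α̃_k = Q̃_{k+1}` and `β_k = h Q_k/s_{k+1}`, the discrete-time Volterra
model holds: `α̃_k = α_k β_{k+1}/β_k` and `β_k - h α_k = β_{k-1}/(β_{k-1} - h α_{k-1})`. -/
theorem stmt12 (μ : ℂ) (Q tQ s : ℤ → ℂ)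
    (hQ : ∀ k : ℤ, Q k ≠ 0)
    (hs0 : ∀ k : ℤ, s k ≠ 0)
    (hs1 : ∀ k : ℤ, s k ≠ 1)
    (h1 : ∀ k : ℤ, tQ k = Q k * (s k / s (k + 1)))
    (h2 : ∀ k : ℤ, (1 - μ) * Q k = s (k + 1) / ((1 - s k) * (s (k + 1) - 1))) :
    ∀ k : ℤ,
      tQ (k + 1) = Q k * (((μ - 1) * Q (k + 1) / s (k + 2)) / ((μ - 1) * Q k / s (k + 1))) ∧
      (μ - 1) * Q k / s (k + 1) - (μ - 1) * Q k =
        ((μ - 1) * Q (k - 1) / s k) /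
          ((μ - 1) * Q (k - 1) / s k - (μ - 1) * Q (k - 1)) := by
  have hs1' : ∀ k : ℤ, (1 : ℂ) - s k ≠ 0 := fun k =>
    sub_ne_zero.mpr fun h => hs1 k h.symm
  have hμ : μ - 1 ≠ 0 := by
    intro h
    have h0 := h2 0
    norm_num at h0
    rw [show (1 : ℂ) - μ = 0 by linear_combination -h, zero_mul] at h0
    exact div_ne_zero (hs0 1) (mul_ne_zero (hs1' 0)
      (fun h' => hs1' 1 (by linear_combination -h'))) h0.symm
  have key : ∀ k : ℤ, (μ - 1) * Q k * ((1 - s k) * (1 - s (k + 1))) = s (k + 1) := by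
    intro k
    have h := h2 k
    have hd : ((1 : ℂ) - s k) * (s (k + 1) - 1) ≠ 0 :=
      mul_ne_zero (hs1' k) (fun h' => hs1' (k + 1) (by linear_combination -h'))
    rw [eq_div_iff hd] at h
    linear_combination h
  have e1 : ∀ k : ℤ, (μ - 1) * Q k / s (k + 1) - (μ - 1) * Q k = 1 / (1 - s k) := by
    intro k
    have hk := key k
    field_simp [hs0, hs1']
    linear_combination hk
  intro k
  constructor
  · rw [h1 (k + 1)]
    have h2' : k + 1 + 1 = k + 2 := by ring
    rw [h2']
    field_simp [hμ, hQ, hs0]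
  · have hk1 : k - 1 + 1 = k := by ring
    have e := e1 (k - 1)
    have ke := key (k - 1)
    rw [hk1] at e ke
    rw [e1 k, e, one_div (1 - s (k - 1)), div_eq_mul_inv ((μ - 1) * Q (k - 1) / s k), inv_inv, div_mul_eq_mul_div, div_eq_div_iff (hs1' k) (hs0 k)]
    linear_combination -ke
end
end

section
/- Let M be a symmetric 2×2 complex matrix, let g, u ∈ ℂ with g ≠ 0, and let γ : ℤ → ℂ² be a discrete curve satisfying the recursion γ_{k+2} = (u/g)·γ_{k+1} − γ_k for all k ∈ ℤ, whose initial points satisfy ⟨Mγ₀,γ₀⟩ = 1, ⟨Mγ₁,γ₁⟩ = 1 and ⟨Mγ₀,γ₁⟩ = u/(2g). Then for all k ∈ ℤ: ⟨Mγ_k,γ_k⟩ = 1 and ⟨Mγ_k,γ_{k+1}⟩ = u/(2g); i.e. γ is a discrete quadric: all its points lie on the quadric ⟨Mv,v⟩ = 1. -/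
noncomputable section

/-- The naive complexification `⟨a,b⟩ = a₁b₁ + a₂b₂` of the real scalar product to `ℂ²`. -/
def bil (a b : Fin 2 → ℂ) : ℂ := a 0 * b 0 + a 1 * b 1

lemma bil_symm (M : Matrix (Fin 2) (Fin 2) ℂ) (hM : M.IsSymm) (a b : Fin 2 → ℂ) :
    bil (M.mulVec a) b = bil (M.mulVec b) a := by
  have h10 : M 1 0 = M 0 1 := by
    have := congrFun (congrFun hM 1) 0
    simpa using this.symm
  simp only [bil, Matrix.mulVec, dotProduct, Fin.sum_univ_two]
  linear_combination (a 0 * b 1 - a 1 * b 0) * h10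

lemma bil_left (M : Matrix (Fin 2) (Fin 2) ℂ) (x : ℂ) (a b c : Fin 2 → ℂ) :
    bil (M.mulVec (x • a - b)) c = x * bil (M.mulVec a) c - bil (M.mulVec b) c := by
  simp only [bil, Matrix.mulVec, dotProduct, Fin.sum_univ_two, Pi.sub_apply,
    Pi.smul_apply, smul_eq_mul]
  ring

lemma bil_right (x : ℂ) (v a b : Fin 2 → ℂ) :
    bil v (x • a - b) = x * bil v a - bil v b := by
  simp only [bil, Pi.sub_apply, Pi.smul_apply, smul_eq_mul]
  ring

/-- Let `M` be a symmetric 2×2 complex matrix, `g ≠ 0`, and let `γ : ℤ → ℂ²` satisfy the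
recursion `γ_{k+2} = (u/g) γ_{k+1} - γ_k` with initial conditions `⟨Mγ₀,γ₀⟩ = 1`,
`⟨Mγ₁,γ₁⟩ = 1`, `⟨Mγ₀,γ₁⟩ = u/(2g)`. Then `⟨Mγ_k,γ_k⟩ = 1` and `⟨Mγ_k,γ_{k+1}⟩ = u/(2g)`
for all `k ∈ ℤ`: `γ` is a discrete quadric, all its points lying on the quadric
`⟨Mv,v⟩ = 1`. -/
theorem stmt18 (M : Matrix (Fin 2) (Fin 2) ℂ) (hM : M.IsSymm) (g u : ℂ) (hg : g ≠ 0)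
    (γ : ℤ → Fin 2 → ℂ)
    (hrec : ∀ k : ℤ, γ (k + 2) = (u / g) • γ (k + 1) - γ k)
    (h0 : bil (M.mulVec (γ 0)) (γ 0) = 1)
    (h1 : bil (M.mulVec (γ 1)) (γ 1) = 1)
    (h01 : bil (M.mulVec (γ 0)) (γ 1) = u / (2 * g)) :
    ∀ k : ℤ,
      bil (M.mulVec (γ k)) (γ k) = 1 ∧
      bil (M.mulVec (γ k)) (γ (k + 1)) = u / (2 * g) := by
  set a : ℂ := u / g with ha
  set c : ℂ := u / (2 * g) with hc
  have hac : a - c = c := by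
    rw [ha, hc]
    field_simp
    ring
  suffices H : ∀ k : ℤ, bil (M.mulVec (γ k)) (γ k) = 1 ∧
      bil (M.mulVec (γ (k + 1))) (γ (k + 1)) = 1 ∧
      bil (M.mulVec (γ k)) (γ (k + 1)) = c by
    intro k
    exact ⟨(H k).1, (H k).2.2⟩
  intro k
  induction k using Int.induction_on with
  | zero => exact ⟨h0, by simpa using h1, by simpa using h01⟩
  | succ i ih =>
    obtain ⟨Q0, Q1, B⟩ := ih
    have hr : γ ((i : ℤ) + 1 + 1) = a • γ ((i : ℤ) + 1) - γ (i : ℤ) := by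
      rw [show ((i : ℤ) + 1 + 1) = (i : ℤ) + 2 from by ring]
      exact hrec i
    have B' : bil (M.mulVec (γ ((i:ℤ) + 1))) (γ ((i:ℤ) + 1 + 1)) = c := by
      rw [hr, bil_right, Q1, bil_symm M hM, B, mul_one]
      exact hac
    have Q2 : bil (M.mulVec (γ ((i:ℤ) + 1 + 1))) (γ ((i:ℤ) + 1 + 1)) = 1 := by
      rw [hr, bil_left, bil_right, bil_right, Q0, Q1, B,
        bil_symm M hM (γ ((i:ℤ)+1)) (γ (i:ℤ)), B]
      linear_combination a * hac
    exact ⟨Q1, Q2, B'⟩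
  | pred i ih =>
    obtain ⟨Q0, Q1, B⟩ := ih
    have hr0 := hrec (-(i : ℤ) - 1)
    rw [show (-(i : ℤ) - 1 + 2) = (-(i : ℤ) + 1) from by ring,
      show (-(i : ℤ) - 1 + 1) = (-(i : ℤ)) from by ring] at hr0
    have hr : γ (-(i : ℤ) - 1) = a • γ (-(i : ℤ)) - γ (-(i : ℤ) + 1) := by
      rw [hr0]
      funext j
      simp only [Pi.sub_apply, Pi.smul_apply, smul_eq_mul]
      ring
    have B' : bil (M.mulVec (γ (-(i:ℤ) - 1))) (γ (-(i:ℤ) - 1 + 1)) = c := by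
      rw [show (-(i:ℤ) - 1 + 1) = -(i:ℤ) from by ring]
      rw [bil_symm M hM, hr, bil_right, Q0, B, mul_one]
      exact hac
    have Q2 : bil (M.mulVec (γ (-(i:ℤ) - 1))) (γ (-(i:ℤ) - 1)) = 1 := by
      rw [hr, bil_left, bil_right, bil_right, Q0, Q1, B,
        bil_symm M hM (γ (-(i:ℤ)+1)) (γ (-(i:ℤ))), B]
      linear_combination a * hac
    refine ⟨Q2, ?_, B'⟩
    rw [show (-(i:ℤ) - 1 + 1) = -(i:ℤ) from by ring]
    exact Q0
end
end

section
/- Let ρ ∈ ℂ, let M be a symmetric 2×2 complex matrix, let g, u ∈ ℂ with g ≠ 0, and let γ : ℝ → ℤ → ℂ² be differentiable in t with ∂_t γ_k = ρ·(γ_{k+1} − γ_{k−1}) for all t,k. Suppose at time t₀ the curve γ(t₀) satisfies the recursion γ_{k+2} = (u/g)·γ_{k+1} − γ_k and the quadric conditions ⟨Mγ_k,γ_k⟩ = 1 and ⟨Mγ_k,γ_{k+1}⟩ = u/(2g) for all k ∈ ℤ. Then for all k: (d/dt)⟨Mγ_k(t),γ_k(t)⟩ = 0 and (d/dt)⟨Mγ_k(t),γ_{k+1}(t)⟩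 = 0 at t = t₀; i.e. the flow direction ρ(γ_{k+1} − γ_{k−1}) along a discrete quadric is tangent to the quadric on which the points of γ lie. -/
noncomputable section

/-- Let `M` be a symmetric 2×2 complex matrix, `g ≠ 0`, and let `γ : ℝ → ℤ → ℂ²` evolve by
`∂_t γ_k = ρ(γ_{k+1} - γ_{k-1})`. If at time `t₀` the curve satisfies the discrete quadric
recursion `γ_{k+2} = (u/g) γ_{k+1} - γ_k` and the quadric conditions `⟨Mγ_k,γ_k⟩ = 1`,
`⟨Mγ_k,γ_{k+1}⟩ = u/(2g)`, then at `t₀` both quantities have vanishing time derivative: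
the flow direction `ρ(γ_{k+1} - γ_{k-1})` is tangent to the quadric on which the points of
`γ` lie. -/
theorem stmt19 (ρ : ℂ) (M : Matrix (Fin 2) (Fin 2) ℂ) (hM : M.IsSymm) (g u : ℂ) (hg : g ≠ 0)
    (γ : ℝ → ℤ → Fin 2 → ℂ) (t₀ : ℝ)
    (hflow : ∀ (t : ℝ) (k : ℤ), HasDerivAt (fun s => γ s k)
      (ρ • (γ t (k + 1) - γ t (k - 1))) t)
    (hrec : ∀ k : ℤ, γ t₀ (k + 2) = (u / g) • γ t₀ (k + 1) - γ t₀ k)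
    (hq : ∀ k : ℤ, bil (M.mulVec (γ t₀ k)) (γ t₀ k) = 1)
    (hq' : ∀ k : ℤ, bil (M.mulVec (γ t₀ k)) (γ t₀ (k + 1)) = u / (2 * g)) :
    ∀ k : ℤ,
      HasDerivAt (fun s => bil (M.mulVec (γ s k)) (γ s k)) 0 t₀ ∧
      HasDerivAt (fun s => bil (M.mulVec (γ s k)) (γ s (k + 1))) 0 t₀ := by
  intro k
  have hcomp : ∀ (m : ℤ) (i : Fin 2),
      HasDerivAt (fun s => γ s m i) (ρ * (γ t₀ (m + 1) i - γ t₀ (m - 1) i)) t₀ := by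
    intro m i
    have := hasDerivAt_pi.mp (hflow t₀ m) i
    simpa using this
  have key : ∀ m n : ℤ, HasDerivAt (fun s => bil (M.mulVec (γ s m)) (γ s n))
      ((M 0 0 * (ρ * (γ t₀ (m + 1) 0 - γ t₀ (m - 1) 0))
          + M 0 1 * (ρ * (γ t₀ (m + 1) 1 - γ t₀ (m - 1) 1))) * γ t₀ n 0
        + (M 0 0 * γ t₀ m 0 + M 0 1 * γ t₀ m 1) * (ρ * (γ t₀ (n + 1) 0 - γ t₀ (n - 1) 0))
        + ((M 1 0 * (ρ * (γ t₀ (m + 1) 0 - γ t₀ (m - 1) 0))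
          + M 1 1 * (ρ * (γ t₀ (m + 1) 1 - γ t₀ (m - 1) 1))) * γ t₀ n 1
        + (M 1 0 * γ t₀ m 0 + M 1 1 * γ t₀ m 1) * (ρ * (γ t₀ (n + 1) 1 - γ t₀ (n - 1) 1)))) t₀ := by
    intro m n
    have hfun : (fun s => bil (M.mulVec (γ s m)) (γ s n))
        = fun s => (M 0 0 * γ s m 0 + M 0 1 * γ s m 1) * γ s n 0
          + (M 1 0 * γ s m 0 + M 1 1 * γ s m 1) * γ s n 1 := by
      funext s
      simp [bil, Matrix.mulVec, dotProduct, Fin.sum_univ_two]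
    rw [hfun]
    exact ((((hcomp m 0).const_mul (M 0 0)).add ((hcomp m 1).const_mul (M 0 1))).mul
        (hcomp n 0)).add
      ((((hcomp m 0).const_mul (M 1 0)).add ((hcomp m 1).const_mul (M 1 1))).mul (hcomp n 1))
  have e1 : k - 1 + 1 = k := by ring
  have e2 : k - 1 + 2 = k + 1 := by ring
  have e3 : k + 1 - 1 = k := by ring
  have e4 : k + 1 + 1 = k + 2 := by ring
  have msym : M 1 0 = M 0 1 := hM.apply 0 1
  have h0 := hq (k - 1)
  have h1 := hq k
  have h2 := hq (k + 1)
  have h3 := hq' k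
  have h4 := hq' (k - 1)
  rw [e1] at h4
  have h5 := hrec k
  have h6 := hrec (k - 1)
  rw [e2, e1] at h6
  have h5_0 := congrFun h5 0
  have h5_1 := congrFun h5 1
  have h6_0 := congrFun h6 0
  have h6_1 := congrFun h6 1
  simp only [bil, Matrix.mulVec, dotProduct, Fin.sum_univ_two, Pi.smul_apply,
    Pi.sub_apply, smul_eq_mul, msym] at h0 h1 h2 h3 h4 h5_0 h5_1 h6_0 h6_1
  constructor
  · have H := key k k
    convert H using 1
    simp only [msym]
    linear_combination (-2 * ρ) * h3 + (2 * ρ) * h4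
  · have H := key k (k + 1)
    rw [e3, e4] at H
    convert H using 1
    simp only [msym]
    linear_combination (-ρ) * h2 - ρ * h0 + 2 * ρ * h1 - (ρ * u / g) * h3 + (ρ * u / g) * h4
      - ρ * (M 0 0 * γ t₀ k 0 + M 0 1 * γ t₀ k 1) * h5_0
      - ρ * (M 0 1 * γ t₀ k 0 + M 1 1 * γ t₀ k 1) * h5_1
      + ρ * (M 0 0 * γ t₀ (k - 1) 0 + M 0 1 * γ t₀ (k - 1) 1) * h6_0
      + ρ * (M 0 1 * γ t₀ (k - 1) 0 + M 1 1 * γ t₀ (k - 1) 1) * h6_1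
end
end
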